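/- For all x ∈ M and y ∈ N, the identity (sx) ⊗ y − Σ_{k=0}^{p−2} ((s − s_k)x) ⊗ t^k (dy) = s( x ⊗ y ) holds in M ⊗_ℤ N. -/

import Mathlib

/-!
Expanding `t^k (d y) = t^k y - t^{k+1} y` and `(s - s_k) x = ∑_{k < j < p} t^j x`, the subtracted
double sum becomes, after exchanging the order of summation, `∑_j t^j x ⊗ ∑_{k<j} (t^k y - t^{k+1} y)`,
which telescopes to `∑_j t^j x ⊗ (y - t^j y)`. Hence the left side is `∑_j t^j x ⊗ t^j y`.
-/

open TensorProduct Finset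

theorem LinearMap.sum_range_pred_apply_sum_Ico_sub_succ {R M N P : Type*} [CommSemiring R]
    [AddCommMonoid M] [AddCommGroup N] [AddCommGroup P] [Module R M] [Module R N] [Module R P]
    (B : M →ₗ[R] N →ₗ[R] P) (a : ℕ → M) (b : ℕ → N) (n : ℕ) :
    ∑ k ∈ Finset.range (n - 1), B (∑ j ∈ Ico (k + 1) n, a j) (b k - b (k + 1)) =
      ∑ j ∈ Finset.range n, B (a j) (b 0 - b j) :=
  calc ∑ k ∈ Finset.range (n - 1), B (∑ j ∈ Ico (k + 1) n, a j) (b k - b (k + 1))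
      = ∑ k ∈ Finset.range (n - 1), ∑ j ∈ Ico (k + 1) n, B (a j) (b k - b (k + 1)) := by
        simp only [map_sum, LinearMap.sum_apply]
    _ = ∑ j ∈ Finset.range n, ∑ k ∈ Finset.range j, B (a j) (b k - b (k + 1)) :=
        sum_comm' fun k j => by simp only [Finset.mem_range, Finset.mem_Ico]; omega
    _ = ∑ j ∈ Finset.range n, B (a j) (b 0 - b j) := by
        simp only [← map_sum, sum_range_sub']

theorem Module.End.pow_apply_one_sub {R M : Type*} [Semiring R] [AddCommGroup M] [Module R M]
    (f : Module.End R M) (k : ℕ) (y : M) :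
    (f ^ k) ((1 - f) y) = (f ^ k) y - (f ^ (k + 1)) y := by
  rw [LinearMap.sub_apply, Module.End.one_apply, map_sub, pow_succ, Module.End.mul_apply]

theorem TensorProduct.sum_range_pow_map_tmul {R M N : Type*} [CommSemiring R] [AddCommMonoid M]
    [AddCommMonoid N] [Module R M] [Module R N] (f : Module.End R M) (g : Module.End R N)
    (n : ℕ) (x : M) (y : N) :
    (∑ j ∈ range n, map f g ^ j) (x ⊗ₜ[R] y) = ∑ j ∈ range n, (f ^ j) x ⊗ₜ[R] (g ^ j) y := by
  simp only [LinearMap.sum_apply, TensorProduct.map_pow, map_tmul]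

theorem s_tensor_minus_sum_smash_d
    (p : ℕ)
    (M N : Type) [AddCommGroup M] [AddCommGroup N]
    (tM : Module.End ℤ M) (tN : Module.End ℤ N)
    (x : M) (y : N) :
    (((∑ j ∈ range p, tM ^ j) x) ⊗ₜ[ℤ] y) -
      ∑ k ∈ range (p - 1),
        ((((∑ j ∈ range p, tM ^ j) - ∑ j ∈ range (k + 1), tM ^ j) x) ⊗ₜ[ℤ]
          ((tN ^ k) ((1 - tN) y)))
      =
      (∑ j ∈ range p, (TensorProduct.map tM tN) ^ j) (x ⊗ₜ[ℤ] y) := by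
  have tail : ∀ k ∈ range (p - 1),
      (((∑ j ∈ range p, tM ^ j) - ∑ j ∈ range (k + 1), tM ^ j) x) ⊗ₜ[ℤ] (tN ^ k) ((1 - tN) y) =
        TensorProduct.mk ℤ M N (∑ j ∈ Ico (k + 1) p, (tM ^ j) x)
          ((tN ^ k) y - (tN ^ (k + 1)) y) := by
    intro k hk
    rw [← sum_Ico_eq_sub _ (by rw [mem_range] at hk; omega), LinearMap.sum_apply,
      Module.End.pow_apply_one_sub, mk_apply]
  rw [sum_congr rfl tail, LinearMap.sum_range_pred_apply_sum_Ico_sub_succ,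
    sum_range_pow_map_tmul, LinearMap.sum_apply, sum_tmul, ← sum_sub_distrib]
  simp only [mk_apply, pow_zero, Module.End.one_apply, tmul_sub, sub_sub_cancel]
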